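/- Under the Misra-Bugajski map, R(μ) equals a rank-one projection P if and only if μ is the Dirac measure δ_P; in particular R restricts to a bijection between Dirac measures and pure quantum states. -/

import Mathlib

open MeasureTheory Topology Filter

/-- The rank-one operator `|φ⟩⟨φ|`. -/
noncomputable def rankOne {H : Type*} [NormedAddCommGroup H] [InnerProductSpace ℂ H]
    (φ : H) : H →L[ℂ] H := (innerSL ℂ φ).smulRight φ

/-- The set of rank-one orthogonal projections (pure states / projective Hilbert space). -/
noncomputable def projSet (H : Type*) [NormedAddCommGroup H] [InnerProductSpace ℂ H] :
    Set (H →L[ℂ] H) := {T | ∃ φ : H, ‖φ‖ = 1 ∧ T = rankOne φ}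

/-- The trace of an operator computed along a Hilbert basis. -/
noncomputable def traceAlong {H ι : Type*} [NormedAddCommGroup H] [InnerProductSpace ℂ H]
    (b : HilbertBasis ι ℂ H) (A : H →L[ℂ] H) : ℂ :=
  ∑' i, inner ℂ (b i) (A (b i))

/-- `W` is a density operator: positive, trace class, with trace one
(trace computed along the Hilbert basis `b`). -/
noncomputable def IsDensityOp {H ι : Type*} [NormedAddCommGroup H] [InnerProductSpace ℂ H]
    [CompleteSpace H] (b : HilbertBasis ι ℂ H) (W : H →L[ℂ] H) : Prop :=
  W.IsPositive ∧ HasSum (fun i => (inner ℂ (b i) (W (b i)) : ℂ)) 1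

/-- `W` is the image of `μ` under the Misra-Bugajski map:
`tr(W A) = ∫ tr(P A) dμ(P)` for all bounded self-adjoint `A`. -/
noncomputable def IsMB {H ι : Type*} [NormedAddCommGroup H] [InnerProductSpace ℂ H]
    [CompleteSpace H] [MeasurableSpace ↥(projSet H)] (b : HilbertBasis ι ℂ H)
    (μ : Measure ↥(projSet H)) (W : H →L[ℂ] H) : Prop :=
  IsDensityOp b W ∧ ∀ A : H →L[ℂ] H, IsSelfAdjoint A →
    traceAlong b (W * A) = ∫ P, traceAlong b (P.1 * A) ∂μ

/-!
If `R(μ) = P = |φ⟩⟨φ|`, test the defining identity of `R` against `A = P`: the left side is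
`tr(P²) = 1`, the right side is the `μ`-average of the transition probability `⟨φ, Qφ⟩ = |⟨φ, ψ⟩|²`
of `Q = |ψ⟩⟨ψ|`. By Cauchy-Schwarz this quantity is at most `1`, with equality only when `ψ` is a
phase multiple of `φ`, i.e. `Q = P`. An average of a function bounded by `1` equals `1` only if
the function is `1` almost everywhere, so `μ` is concentrated at `P`.
-/

namespace MeasureTheory.Measure

lemma eq_dirac_of_ae_eq {α : Type*} [MeasurableSpace α] {μ : Measure α} [IsProbabilityMeasure μ]
    {a : α} (h : ∀ᵐ x ∂μ, x = a) : μ = dirac a :=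
  calc μ = μ.map id := map_id.symm
    _ = μ.map (fun _ ↦ a) := map_congr h
    _ = dirac a := by simp [map_const]

end MeasureTheory.Measure

noncomputable def transitionProb {H : Type*} [NormedAddCommGroup H] [InnerProductSpace ℂ H]
    (φ : H) (P : H →L[ℂ] H) : ℝ :=
  (inner ℂ φ (P φ)).re

section RankOne

variable {H : Type*} [NormedAddCommGroup H] [InnerProductSpace ℂ H]

local notation "⟪" x ", " y "⟫" => @inner ℂ _ _ x y

lemma rankOne_apply (φ x : H) : rankOne φ x = ⟪φ, x⟫ • φ := rfl

lemma rankOne_smul_of_norm_eq_one {c : ℂ} (hc : ‖c‖ = 1) (φ : H) :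
    rankOne (c • φ) = rankOne φ := by
  ext x
  have hc' : (starRingEnd ℂ) c * c = 1 := by simp [RCLike.conj_mul, hc]
  simp only [rankOne_apply, inner_smul_left, smul_smul]
  rw [mul_right_comm, hc', one_mul]

lemma inner_rankOne_self (ψ φ : H) : ⟪φ, rankOne ψ φ⟫ = ((‖⟪ψ, φ⟫‖ ^ 2 : ℝ) : ℂ) := by
  rw [rankOne_apply, inner_smul_right, ← inner_conj_symm φ ψ, mul_comm, RCLike.conj_mul]
  norm_cast

lemma isSelfAdjoint_rankOne [CompleteSpace H] (φ : H) : IsSelfAdjoint (rankOne φ) := by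
  rw [ContinuousLinearMap.isSelfAdjoint_iff_isSymmetric]
  intro x y
  simp only [ContinuousLinearMap.coe_coe, rankOne_apply, inner_smul_left, inner_smul_right,
    inner_conj_symm]
  ring

lemma isPositive_rankOne [CompleteSpace H] (φ : H) : (rankOne φ).IsPositive := by
  refine ⟨(isSelfAdjoint_rankOne φ).isSymmetric, fun x ↦ ?_⟩
  rw [ContinuousLinearMap.reApplyInnerSelf_apply, ← inner_conj_symm, inner_rankOne_self]
  simp only [Complex.conj_ofReal, RCLike.re_to_complex, Complex.ofReal_re]
  positivity

lemma rankOne_eq_of_norm_inner_eq_one {φ ψ : H} (hφ : ‖φ‖ = 1) (hψ : ‖ψ‖ = 1)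
    (h : ‖⟪φ, ψ⟫‖ = 1) : rankOne ψ = rankOne φ := by
  have hφ0 : φ ≠ 0 := norm_ne_zero_iff.1 (by simp [hφ])
  have hψ0 : ψ ≠ 0 := norm_ne_zero_iff.1 (by simp [hψ])
  obtain ⟨c, -, rfl⟩ := (norm_inner_eq_norm_iff hφ0 hψ0).1 (by rw [h, hφ, hψ, one_mul])
  rw [norm_smul, hφ, mul_one] at hψ
  exact rankOne_smul_of_norm_eq_one hψ φ

lemma transitionProb_rankOne (φ ψ : H) : transitionProb φ (rankOne ψ) = ‖⟪ψ, φ⟫‖ ^ 2 := by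
  rw [transitionProb, inner_rankOne_self, Complex.ofReal_re]

lemma continuous_transitionProb (φ : H) : Continuous (transitionProb φ) :=
  Complex.continuous_re.comp <| continuous_const.inner <|
    (ContinuousLinearMap.apply ℂ H φ).continuous

lemma transitionProb_mem_Icc {φ : H} (hφ : ‖φ‖ = 1) {P : H →L[ℂ] H} (hP : P ∈ projSet H) :
    transitionProb φ P ∈ Set.Icc 0 1 := by
  obtain ⟨ψ, hψ, rfl⟩ := hP
  have := norm_inner_le_norm (𝕜 := ℂ) ψ φ
  rw [hφ, hψ, one_mul] at this
  rw [transitionProb_rankOne]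
  exact ⟨by positivity, pow_le_one₀ (norm_nonneg _) this⟩

lemma eq_of_transitionProb_eq_one {φ : H} (hφ : ‖φ‖ = 1) {P : H →L[ℂ] H} (hP : P ∈ projSet H)
    (h : transitionProb φ P = 1) : P = rankOne φ := by
  obtain ⟨ψ, hψ, rfl⟩ := hP
  rw [transitionProb_rankOne, pow_eq_one_iff_of_nonneg (norm_nonneg _) two_ne_zero,
    norm_inner_symm] at h
  exact rankOne_eq_of_norm_inner_eq_one hφ hψ h

lemma transitionProb_rankOne_self {φ : H} (hφ : ‖φ‖ = 1) : transitionProb φ (rankOne φ) = 1 := by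
  rw [transitionProb_rankOne, inner_self_eq_norm_sq_to_K, hφ]
  simp

variable {ι : Type*} (b : HilbertBasis ι ℂ H)

lemma traceAlong_rankOne_mul_rankOne (ψ φ : H) :
    traceAlong b (rankOne ψ * rankOne φ) = ⟪φ, rankOne ψ φ⟫ := by
  rw [rankOne_apply, inner_smul_right]
  refine (((b.hasSum_inner_mul_inner φ ψ).mul_left ⟪ψ, φ⟫).congr_fun fun i ↦ ?_).tsum_eq
  simp only [mul_apply_eq_comp, rankOne_apply, inner_smul_right, map_smul, smul_smul]
  ring

lemma traceAlong_mul_rankOne {φ : H} {P : H →L[ℂ] H} (hP : P ∈ projSet H) :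
    traceAlong b (P * rankOne φ) = transitionProb φ P := by
  obtain ⟨ψ, -, rfl⟩ := hP
  rw [traceAlong_rankOne_mul_rankOne, transitionProb_rankOne, inner_rankOne_self]

lemma isDensityOp_rankOne [CompleteSpace H] {φ : H} (hφ : ‖φ‖ = 1) :
    IsDensityOp b (rankOne φ) := by
  refine ⟨isPositive_rankOne φ, ?_⟩
  have hφφ : ⟪φ, φ⟫ = 1 := by simp [inner_self_eq_norm_sq_to_K, hφ]
  refine hφφ ▸ (b.hasSum_inner_mul_inner φ φ).congr_fun fun i ↦ ?_
  rw [rankOne_apply, inner_smul_right, mul_comm]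

end RankOne

section ProjSet

variable {H ι : Type*} [NormedAddCommGroup H] [InnerProductSpace ℂ H] [CompleteSpace H]
  (b : HilbertBasis ι ℂ H) [MeasurableSpace (projSet H)] [BorelSpace (projSet H)]

lemma isMB_dirac (p : projSet H) : IsMB b (Measure.dirac p) p := by
  obtain ⟨φ, hφ, hp⟩ := p.2
  exact ⟨hp ▸ isDensityOp_rankOne b hφ, fun A _ ↦ by rw [integral_dirac]⟩

lemma ae_eq_of_isMB {μ : Measure (projSet H)} [IsProbabilityMeasure μ] {p : projSet H}
    (h : IsMB b μ p) : ∀ᵐ P ∂μ, P = p := by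
  obtain ⟨φ, hφ, hp⟩ := p.2
  set g : projSet H → ℝ := fun P ↦ transitionProb φ P
  have hg_Icc (P : projSet H) : g P ∈ Set.Icc 0 1 := transitionProb_mem_Icc hφ P.2
  have hg_int : Integrable g μ :=
    .of_bound ((continuous_transitionProb φ).comp continuous_subtype_val).aestronglyMeasurable 1
      (ae_of_all _ fun P ↦ by rw [Real.norm_of_nonneg (hg_Icc P).1]; exact (hg_Icc P).2)
  have hg_integral : ∫ P, g P ∂μ = ∫ _, (1 : ℝ) ∂μ := by
    have hA := h.2 p (hp ▸ isSelfAdjoint_rankOne φ)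
    have htr (P : projSet H) : traceAlong b (P * rankOne φ) = g P := traceAlong_mul_rankOne b P.2
    rw [hp, traceAlong_mul_rankOne b (hp ▸ p.2), transitionProb_rankOne_self hφ] at hA
    simp_rw [htr, integral_complex_ofReal] at hA
    rw [integral_const, probReal_univ, one_smul]
    exact_mod_cast hA.symm
  filter_upwards [(integral_eq_iff_of_ae_le hg_int (integrable_const 1)
    (ae_of_all _ fun P ↦ (hg_Icc P).2)).1 hg_integral] with P hP
  exact Subtype.ext (hp ▸ eq_of_transitionProb_eq_one hφ P.2 hP)

end ProjSet

theorem stmt15_general {H ι : Type*} [NormedAddCommGroup H] [InnerProductSpace ℂ H] [CompleteSpace H]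
    (b : HilbertBasis ι ℂ H)
    [MeasurableSpace ↥(projSet H)] [BorelSpace ↥(projSet H)] :
    (∀ (μ : Measure ↥(projSet H)) [IsProbabilityMeasure μ] (p : ↥(projSet H)),
        IsMB b μ (p : H →L[ℂ] H) ↔ μ = Measure.dirac p) ∧
    (∀ p : ↥(projSet H), IsMB b (Measure.dirac p) (p : H →L[ℂ] H)) :=
  ⟨fun _ _ p ↦ ⟨fun h ↦ Measure.eq_dirac_of_ae_eq (ae_eq_of_isMB b h),
    fun h ↦ h ▸ isMB_dirac b p⟩, isMB_dirac b⟩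

theorem stmt15 {H ι : Type*} [NormedAddCommGroup H] [InnerProductSpace ℂ H] [CompleteSpace H]
    [Nontrivial H] [SecondCountableTopology H] (b : HilbertBasis ι ℂ H)
    [MeasurableSpace ↥(projSet H)] [BorelSpace ↥(projSet H)] :
    (∀ (μ : Measure ↥(projSet H)) [IsProbabilityMeasure μ] (p : ↥(projSet H)),
        IsMB b μ (p : H →L[ℂ] H) ↔ μ = Measure.dirac p) ∧
    (∀ p : ↥(projSet H), IsMB b (Measure.dirac p) (p : H →L[ℂ] H)) :=
  stmt15_general b
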